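/- Let G be a graph containing a 4-vertex v lying on two 3-cycles vu1u2 and vw1w2 with deg_G(u1) = deg_G(w1) = 3 and deg_G(u2) = deg_G(w2) = 4. Then the subgraph induced by {u1,u2,v,w1,w2} is ({C4},4)-boundary-reducible with empty boundary. -/

import Mathlib

open Finset

/-- A proper coloring of `G` from the lists `L`. -/
def IsProperListColoring {V : Type} (G : SimpleGraph V) (L : V → Finset ℕ) (φ : V → ℕ) : Prop :=
  (∀ v, φ v ∈ L v) ∧ ∀ ⦃u v : V⦄, G.Adj u v → φ u ≠ φ v

/-- `G` is weighted `ε`-flexible for lists of size `k`. -/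
def WeightedFlexible {V : Type} [Fintype V] (G : SimpleGraph V) (k : ℕ) (ε : ℝ) : Prop :=
  ∀ L : V → Finset ℕ, (∀ v, k ≤ (L v).card) →
    ∀ w : V → ℕ → ℝ, (∀ v c, 0 ≤ w v c) → (∀ v c, c ∉ L v → w v c = 0) →
      ∃ φ : V → ℕ, IsProperListColoring G L φ ∧
        ε * (∑ v, ∑ c ∈ L v, w v c) ≤ ∑ v, w v (φ v)

/-- `G` is weakly `ε`-flexible for lists of size `k`. -/
def WeaklyFlexible {V : Type} [Fintype V] (G : SimpleGraph V) (k : ℕ) (ε : ℝ) : Prop :=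
  ∀ L : V → Finset ℕ, (∀ v, k ≤ (L v).card) →
    ∀ r : V → ℕ, (∀ v, r v ∈ L v) →
      ∃ φ : V → ℕ, IsProperListColoring G L φ ∧
        ε * (Fintype.card V : ℝ) ≤ ((Finset.univ.filter fun v => φ v = r v).card : ℝ)

/-- `G` has a drawing in the plane: vertices go to distinct points, edges to simple
continuous arcs joining their endpoints, arcs internally avoid vertices and each other. -/
def HasPlanarEmbedding {V : Type} (G : SimpleGraph V) : Prop :=
  ∃ (pos : V → ℝ × ℝ) (γ : Sym2 V → ℝ → ℝ × ℝ),
    Function.Injective pos ∧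
    (∀ e ∈ G.edgeSet, ContinuousOn (γ e) (Set.Icc 0 1)) ∧
    (∀ e ∈ G.edgeSet, Set.InjOn (γ e) (Set.Icc 0 1)) ∧
    (∀ u v : V, G.Adj u v → ({γ s(u, v) 0, γ s(u, v) 1} : Set (ℝ × ℝ)) = {pos u, pos v}) ∧
    (∀ e ∈ G.edgeSet, ∀ t ∈ Set.Ioo (0 : ℝ) 1, γ e t ∉ Set.range pos) ∧
    (∀ e ∈ G.edgeSet, ∀ f ∈ G.edgeSet, e ≠ f →
      ∀ s ∈ Set.Ioo (0 : ℝ) 1, ∀ t ∈ Set.Ioo (0 : ℝ) 1, γ e s ≠ γ f t)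

/-- `G` contains a copy of the graph `p.2` as a (not necessarily induced) subgraph. -/
def ContainsCopy {V : Type} (G : SimpleGraph V) (p : (W : Type) × SimpleGraph W) : Prop :=
  ∃ f : p.2 →g G, Function.Injective f

/-- `K₄` minus an edge (the diamond). -/
def diamondGraph : SimpleGraph (Fin 4) :=
  SimpleGraph.fromEdgeSet {s(0, 1), s(0, 2), s(0, 3), s(1, 2), s(1, 3)}

/-- The house: a `3`-cycle `0 1 4` and a `4`-cycle `0 1 2 3` sharing the edge `01`. -/
def houseGraph : SimpleGraph (Fin 5) :=
  SimpleGraph.fromEdgeSet {s(0, 1), s(1, 2), s(2, 3), s(3, 0), s(0, 4), s(1, 4)}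

/-- Two triangles sharing exactly one vertex. -/
def bowtieGraph : SimpleGraph (Fin 5) :=
  SimpleGraph.fromEdgeSet {s(0, 1), s(1, 2), s(0, 2), s(0, 3), s(3, 4), s(0, 4)}

/-- Two disjoint triangles joined by an edge. -/
def twoTrianglesEdgeGraph : SimpleGraph (Fin 6) :=
  SimpleGraph.fromEdgeSet {s(0, 1), s(1, 2), s(0, 2), s(3, 4), s(4, 5), s(3, 5), s(0, 3)}

def IsTriangle {V : Type} (G : SimpleGraph V) (a b c : V) : Prop :=
  G.Adj a b ∧ G.Adj b c ∧ G.Adj a c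

/-- Any two distinct `3`-cycles of `G` are at distance at least `2`. -/
def TrianglesFarApart {V : Type} (G : SimpleGraph V) : Prop :=
  ∀ a b c a' b' c' : V, IsTriangle G a b c → IsTriangle G a' b' c' →
    ({a, b, c} : Set V) ≠ ({a', b', c'} : Set V) →
    ∀ x ∈ ({a, b, c} : Set V), ∀ y ∈ ({a', b', c'} : Set V), x ≠ y ∧ ¬ G.Adj x y

/-- Every nonempty (induced) subgraph of `G` has a vertex of degree at most `d`. -/
def Degenerate {V : Type} (G : SimpleGraph V) [DecidableRel G.Adj] (d : ℕ) : Prop :=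
  ∀ S : Finset V, S.Nonempty → ∃ v ∈ S, (S.filter fun w => G.Adj v w).card ≤ d

/-- The degree of `v` into the set `A`. -/
def degIn {V : Type} (G : SimpleGraph V) [DecidableRel G.Adj] (A : Finset V) (v : V) : ℕ :=
  (A.filter fun w => G.Adj v w).card

/-- The graph induced by `G` on `T` is colorable from every list assignment
with list sizes at least `f`. -/
def ColorableOn {V : Type} (G : SimpleGraph V) (T : Finset V) (f : V → ℤ) : Prop :=
  ∀ L : V → Finset ℕ, (∀ v ∈ T, f v ≤ ((L v).card : ℤ)) →
    ∃ φ : V → ℕ, (∀ v ∈ T, φ v ∈ L v) ∧ ∀ u ∈ T, ∀ v ∈ T, G.Adj u v → φ u ≠ φ v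

/-- The subgraph of `G` induced on `S`, together with one additional vertex
adjacent exactly to the vertices of `I`. -/
def apexGraph {V : Type} (G : SimpleGraph V) (S I : Finset V) :
    SimpleGraph ({x // x ∈ S} ⊕ Unit) where
  Adj x y :=
    match x, y with
    | Sum.inl a, Sum.inl b => G.Adj a.1 b.1
    | Sum.inl a, Sum.inr _ => a.1 ∈ I
    | Sum.inr _, Sum.inl b => b.1 ∈ I
    | Sum.inr _, Sum.inr _ => False
  symm := by
    constructor
    rintro (a | a) (b | b) h
    · exact G.adj_symm h
    · exact h
    · exact h
    · exact h
  loopless := by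
    constructor
    rintro (a | a) h
    · exact G.ne_of_adj h rfl
    · exact h

/-- `I ⊆ S` is `F`-forbidding (for the subgraph of `G` induced on `S`):
the induced subgraph plus an apex over `I` contains no member of `F` as a subgraph. -/
def Forbidding {V : Type} (F : Set ((W : Type) × SimpleGraph W)) (G : SimpleGraph V)
    (S I : Finset V) : Prop :=
  ∀ p ∈ F, ¬ ContainsCopy (apexGraph G S I) p

/-- The subgraph of `G` induced on `S` is `(F,k)`-boundary-reducible with boundary `B`,
inside the ambient induced subgraph of `G` on `A` (degrees `deg_G` are measured in `A`). -/
def BoundaryReducibleIn {V : Type} [DecidableEq V] (F : Set ((W : Type) × SimpleGraph W))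
    (k : ℕ) (G : SimpleGraph V) [DecidableRel G.Adj] (A S B : Finset V) : Prop :=
  S ⊆ A ∧ B ⊂ S ∧
  (∀ v ∈ S \ B, ColorableOn G (S \ B)
      (Function.update (fun w => (k : ℤ) - degIn G A w + degIn G (S \ B) w) v 1)) ∧
  (∀ I : Finset V, I ⊆ S \ B → (I.card : ℤ) ≤ (k : ℤ) - 2 → Forbidding F G S I →
    ColorableOn G (S \ B)
      (fun w => (k : ℤ) - degIn G A w + degIn G (S \ B) w - if w ∈ I then 1 else 0))

/-- Weak `(F,k)`-boundary-reducibility, witnessed by the set `Fx = Fix(H)`. -/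
def WeakBoundaryReducibleInWith {V : Type} [DecidableEq V]
    (F : Set ((W : Type) × SimpleGraph W)) (k : ℕ) (G : SimpleGraph V) [DecidableRel G.Adj]
    (A S B Fx : Finset V) : Prop :=
  S ⊆ A ∧ B ⊂ S ∧ Fx.Nonempty ∧ Fx ⊆ S \ B ∧
  (∀ v ∈ Fx, ColorableOn G (S \ B)
      (Function.update (fun w => (k : ℤ) - degIn G A w + degIn G (S \ B) w) v 1)) ∧
  (∀ I : Finset V, I ⊆ S \ B → (I.card : ℤ) ≤ (k : ℤ) - 2 → Forbidding F G S I →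
    ColorableOn G (S \ B)
      (fun w => (k : ℤ) - degIn G A w + degIn G (S \ B) w - if w ∈ I then 1 else 0))

/-- An `(F,k,b)`-resolution of `G`: nested induced subgraphs `G_i` of `G` on the vertex
sets `A i`, where `G_i` is obtained from `G_{i-1}` by deleting `H_i - B_i` for an induced
`(F,k)`-boundary-reducible subgraph `H_i` (on vertex set `S i`) of `G_{i-1}`,
and the last graph `G_M` is itself reducible with empty boundary and has at most `b` vertices. -/
structure Resolution {V : Type} [Fintype V] [DecidableEq V]
    (F : Set ((W : Type) × SimpleGraph W)) (k b : ℕ)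
    (G : SimpleGraph V) [DecidableRel G.Adj] where
  M : ℕ
  S : ℕ → Finset V
  B : ℕ → Finset V
  A : ℕ → Finset V
  hA0 : A 0 = Finset.univ
  hAstep : ∀ i, 1 ≤ i → i ≤ M → A i = A (i - 1) \ (S i \ B i)
  avoid : ∀ p ∈ F, ¬ ContainsCopy G p
  red : ∀ i, 1 ≤ i → i ≤ M → BoundaryReducibleIn F k G (A (i - 1)) (S i) (B i)
  size : ∀ i, 1 ≤ i → i ≤ M → (S i \ B i).card ≤ b
  last : BoundaryReducibleIn F k G (A M) (A M) ∅
  lastsize : (A M).card ≤ b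

/-- A weak `(F,k,b)`-resolution of `G`; `Fx i` is the set `Fix(H_i)` for the `i`-th
reducible subgraph (`1 ≤ i ≤ M`), and `Fx 0` is the `Fix` set of the last graph `G_M`. -/
structure WeakResolution {V : Type} [Fintype V] [DecidableEq V]
    (F : Set ((W : Type) × SimpleGraph W)) (k b : ℕ)
    (G : SimpleGraph V) [DecidableRel G.Adj] where
  M : ℕ
  S : ℕ → Finset V
  B : ℕ → Finset V
  A : ℕ → Finset V
  Fx : ℕ → Finset V
  hA0 : A 0 = Finset.univ
  hAstep : ∀ i, 1 ≤ i → i ≤ M → A i = A (i - 1) \ (S i \ B i)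
  avoid : ∀ p ∈ F, ¬ ContainsCopy G p
  red : ∀ i, 1 ≤ i → i ≤ M → WeakBoundaryReducibleInWith F k G (A (i - 1)) (S i) (B i) (Fx i)
  size : ∀ i, 1 ≤ i → i ≤ M → (S i \ B i).card ≤ b
  last : WeakBoundaryReducibleInWith F k G (A M) (A M) ∅ (Fx 0)
  lastsize : (A M).card ≤ b

/-- `Fix(G)`: the union of the `Fix` sets of the reducible subgraphs of the resolution. -/
def WeakResolution.FixG {V : Type} [Fintype V] [DecidableEq V]
    {F : Set ((W : Type) × SimpleGraph W)} {k b : ℕ}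
    {G : SimpleGraph V} [DecidableRel G.Adj] (R : WeakResolution F k b G) : Finset V :=
  (Finset.range (R.M + 1)).biUnion R.Fx


/-!
Write `f = 4 - deg_G + deg_H` for the list sizes on `H = G[{u1, u2, v, w1, w2}]`: every
vertex has at least `deg_H` colours, and `u1`, `w1` have one more. Any two vertices of `H` have
a common neighbour in `H`, so a `C4`-forbidding set has at most one vertex. Hence in (FIX) and
in (FORB) only one vertex `x` may have a shorter list, and that list is still nonempty.
Colour `x` first; each neighbour loses one colour and one unit of degree. Every component of
`H - x` contains `u1` or `w1`, and a graph whose lists are as large as the degrees, with a spare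
colour in every component, is colourable greedily by colouring a spare vertex last.
-/

section ListColoring

variable {V : Type} {G : SimpleGraph V}

def IsListColoringOn (G : SimpleGraph V) (T : Finset V) (L : V → Finset ℕ) (φ : V → ℕ) :
    Prop :=
  (∀ v ∈ T, φ v ∈ L v) ∧ ∀ u ∈ T, ∀ v ∈ T, G.Adj u v → φ u ≠ φ v

lemma IsListColoringOn.update [DecidableEq V] {T : Finset V} {L : V → Finset ℕ} {φ : V → ℕ}
    {x : V} {c : ℕ} (hφ : IsListColoringOn G (T.erase x) L φ) (hc : c ∈ L x)
    (hfree : ∀ y ∈ T, G.Adj x y → φ y ≠ c) :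
    IsListColoringOn G T L (Function.update φ x c) := by
  refine ⟨fun y hy => ?_, fun a ha b hb hab => ?_⟩
  · rcases eq_or_ne y x with rfl | hyx
    · simpa using hc
    · simpa [hyx] using hφ.1 y (mem_erase.2 ⟨hyx, hy⟩)
  · have hba : b ≠ a := G.ne_of_adj hab.symm
    rcases eq_or_ne a x with rfl | hax
    · simpa [hba] using (hfree b hb hab).symm
    · rcases eq_or_ne b x with rfl | hbx
      · simpa [hax] using hfree a ha hab.symm
      · simpa [hax, hbx] using
          hφ.2 a (mem_erase.2 ⟨hax, ha⟩) b (mem_erase.2 ⟨hbx, hb⟩) hab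

lemma colorableOn_empty (f : V → ℤ) : ColorableOn G ∅ f :=
  fun _ _ => ⟨fun _ => 0, by simp, by simp⟩

def IsUnionOfComponents (G : SimpleGraph V) (T U : Finset V) : Prop :=
  U ⊆ T ∧ ∀ a ∈ U, ∀ b ∈ T, G.Adj a b → b ∈ U

lemma IsUnionOfComponents.eq_of_forall_adj {T U : Finset V} {c : V}
    (hU : IsUnionOfComponents G T U) (hne : U.Nonempty) (hc : c ∈ T)
    (hdom : ∀ y ∈ T, y ≠ c → G.Adj c y) : U = T := by
  obtain ⟨a, ha⟩ := hne
  have hcU : c ∈ U := by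
    rcases eq_or_ne a c with rfl | hac
    · exact ha
    · exact hU.2 a ha c hc (hdom a (hU.1 ha) hac).symm
  refine hU.1.antisymm fun y hy => ?_
  rcases eq_or_ne y c with rfl | hyc
  · exact hcU
  · exact hU.2 c hcU y hy (hdom y hy hyc)

variable [DecidableRel G.Adj]

lemma degIn_mono {S T : Finset V} (hST : S ⊆ T) (y : V) : degIn G S y ≤ degIn G T y :=
  card_le_card (filter_subset_filter _ hST)

lemma degIn_univ [Fintype V] (y : V) : degIn G univ y = G.degree y := by
  rw [degIn, ← G.neighborFinset_eq_filter, G.card_neighborFinset_eq_degree]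

lemma degIn_erase [DecidableEq V] {T : Finset V} {x : V} (hx : x ∈ T) (y : V) :
    (degIn G (T.erase x) y : ℤ) = degIn G T y - if G.Adj x y then 1 else 0 := by
  unfold degIn
  rw [filter_erase]
  split_ifs with h
  · have hmem : x ∈ T.filter fun w => G.Adj y w := mem_filter.2 ⟨hx, h.symm⟩
    rw [card_erase_of_mem hmem, Nat.cast_sub (card_pos.2 ⟨x, hmem⟩)]
    simp
  · rw [erase_eq_of_notMem fun hm => h (mem_filter.1 hm).2.symm]
    simp

lemma colorableOn_of_erase_of_degIn_lt [DecidableEq V] {T : Finset V} {f : V → ℤ} {x : V}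
    (hx : x ∈ T) (h : ColorableOn G (T.erase x) f) (hlt : (degIn G T x : ℤ) < f x) :
    ColorableOn G T f := by
  intro L hL
  obtain ⟨φ, hφ⟩ := h L fun y hy => hL y (mem_of_mem_erase hy)
  set N := T.filter fun w => G.Adj x w
  have hcard : (N.image φ).card < (L x).card := by
    have := card_image_le (s := N) (f := φ)
    have := hL x hx
    change (N.card : ℤ) < f x at hlt
    omega
  obtain ⟨c, hc, hcφ⟩ := exists_mem_notMem_of_card_lt_card hcard
  exact ⟨_, IsListColoringOn.update hφ hc fun y hy hxy hφc =>
    hcφ (mem_image.2 ⟨y, mem_filter.2 ⟨hy, hxy⟩, hφc⟩)⟩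

lemma colorableOn_of_erase_of_one_le [DecidableEq V] {T : Finset V} {f : V → ℤ} {x : V}
    (hx : x ∈ T) (hfx : 1 ≤ f x)
    (h : ColorableOn G (T.erase x) fun y => f y - if G.Adj x y then 1 else 0) :
    ColorableOn G T f := by
  intro L hL
  obtain ⟨c, hc⟩ : (L x).Nonempty := card_pos.1 (by have := hL x hx; omega)
  let L' : V → Finset ℕ := fun y => if G.Adj x y then (L y).erase c else L y
  have hL' : ∀ y, L' y ⊆ L y := fun y => by unfold L'; split_ifs <;> simp [erase_subset]
  obtain ⟨φ, hφ⟩ := h L' fun y hy => by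
    have := hL y (mem_of_mem_erase hy)
    by_cases hxy : G.Adj x y
    · have := pred_card_le_card_erase (s := L y) (a := c)
      simp only [L', hxy, if_true]
      omega
    · simpa [L', hxy] using this
  refine ⟨_, IsListColoringOn.update ⟨fun y hy => hL' y (hφ.1 y hy), hφ.2⟩ hc
    fun y hy hxy hφc => ?_⟩
  have := hφ.1 y (mem_erase.2 ⟨(G.ne_of_adj hxy).symm, hy⟩)
  simp [L', hxy, hφc] at this

theorem colorableOn_of_degIn_le [DecidableEq V] {f : V → ℤ} {T : Finset V}
    (hdeg : ∀ y ∈ T, (degIn G T y : ℤ) ≤ f y)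
    (hslack : ∀ U, IsUnionOfComponents G T U → U.Nonempty →
      ∃ s ∈ U, (degIn G T s : ℤ) < f s) :
    ColorableOn G T f := by
  induction T using Finset.strongInduction with
  | H T ih =>
  rcases T.eq_empty_or_nonempty with rfl | hT
  · exact colorableOn_empty f
  obtain ⟨w, hw, hlt⟩ := hslack T ⟨subset_rfl, fun _ _ _ hb _ => hb⟩ hT
  refine colorableOn_of_erase_of_degIn_lt hw (ih _ (erase_ssubset hw) ?_ ?_) hlt
  · exact fun y hy => le_trans (by exact_mod_cast degIn_mono (erase_subset w T) y)
      (hdeg y (mem_of_mem_erase hy))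
  · intro U hU hUne
    by_cases hw' : ∃ a ∈ U, G.Adj a w
    · -- a neighbour of the removed vertex gains one unit of slack
      obtain ⟨a, haU, haw⟩ := hw'
      refine ⟨a, haU, ?_⟩
      have := hdeg a (mem_of_mem_erase (hU.1 haU))
      rw [degIn_erase hw, if_pos haw.symm]
      omega
    · push Not at hw'
      have hUT : IsUnionOfComponents G T U := ⟨hU.1.trans (erase_subset w T),
        fun a ha b hb hab =>
          hU.2 a ha b (mem_erase.2 ⟨fun hbw => hw' a ha (hbw ▸ hab), hb⟩) hab⟩
      obtain ⟨s, hsU, hs⟩ := hslack U hUT hUne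
      exact ⟨s, hsU, lt_of_le_of_lt (by exact_mod_cast degIn_mono (erase_subset w T) s) hs⟩

theorem colorableOn_of_one_le_of_degIn_le [DecidableEq V] {f : V → ℤ} {T : Finset V} {x : V}
    (hx : x ∈ T) (hfx : 1 ≤ f x) (hdeg : ∀ y ∈ T, y ≠ x → (degIn G T y : ℤ) ≤ f y)
    (hslack : ∀ U, IsUnionOfComponents G (T.erase x) U → U.Nonempty →
      ∃ s ∈ U, (degIn G T s : ℤ) < f s) :
    ColorableOn G T f := by
  refine colorableOn_of_erase_of_one_le hx hfx (colorableOn_of_degIn_le (fun y hy => ?_) ?_)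
  · have := hdeg y (mem_of_mem_erase hy) (ne_of_mem_erase hy)
    rw [degIn_erase hx]
    omega
  · intro U hU hUne
    obtain ⟨s, hsU, hs⟩ := hslack U hU hUne
    exact ⟨s, hsU, by rw [degIn_erase hx]; omega⟩

end ListColoring

section Bowtie

variable {V : Type} {G : SimpleGraph V}

lemma containsCopy_cycleGraph_four {W : Type} {H : SimpleGraph W} {a b c d : W}
    (hab : H.Adj a b) (hbc : H.Adj b c) (hcd : H.Adj c d) (hda : H.Adj d a)
    (hac : a ≠ c) (hbd : b ≠ d) : ContainsCopy H ⟨Fin 4, SimpleGraph.cycleGraph 4⟩ := by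
  obtain ⟨e⟩ := (SimpleGraph.cycleGraph_isContained_iff (G := H) (by norm_num)).2
    ⟨a, .cons hab (.cons hbc (.cons hcd (.cons hda .nil))), by
      simp [SimpleGraph.Walk.cons_isCycle_iff, hab.ne, hbc.ne, hcd.ne, hda.ne, hac, hbd,
        hab.ne.symm, hda.ne.symm, hac.symm], rfl⟩
  exact ⟨e.toHom, e.injective⟩

lemma containsCopy_apexGraph_of_adj {S I : Finset V} {a z b : V} (ha : a ∈ I) (hb : b ∈ I)
    (hI : I ⊆ S) (hz : z ∈ S) (hab : a ≠ b) (haz : G.Adj a z) (hzb : G.Adj z b) :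
    ContainsCopy (apexGraph G S I) ⟨Fin 4, SimpleGraph.cycleGraph 4⟩ :=
  containsCopy_cycleGraph_four (a := .inr ()) (b := .inl ⟨a, hI ha⟩) (c := .inl ⟨z, hz⟩)
    (d := .inl ⟨b, hI hb⟩) ha haz hzb hb Sum.inr_ne_inl (by simpa using hab)

lemma card_le_one_of_forbidding {S I : Finset V} (hI : I ⊆ S)
    (hforb : Forbidding {⟨Fin 4, SimpleGraph.cycleGraph 4⟩} G S I)
    (hcommon : ∀ a ∈ S, ∀ b ∈ S, a ≠ b → ∃ z ∈ S, G.Adj a z ∧ G.Adj z b) :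
    I.card ≤ 1 := by
  refine card_le_one.2 fun a ha b hb => by_contra fun hab => ?_
  obtain ⟨z, hz, haz, hzb⟩ := hcommon a (hI ha) b (hI hb) hab
  exact hforb _ rfl (containsCopy_apexGraph_of_adj ha hb hI hz hab haz hzb)

structure IsBowtie (G : SimpleGraph V) (v u1 u2 w1 w2 : V) : Prop where
  adj_v_u1 : G.Adj v u1
  adj_v_u2 : G.Adj v u2
  adj_u1_u2 : G.Adj u1 u2
  adj_v_w1 : G.Adj v w1
  adj_v_w2 : G.Adj v w2
  adj_w1_w2 : G.Adj w1 w2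
  disjoint : u1 ≠ w1 ∧ u1 ≠ w2 ∧ u2 ≠ w1 ∧ u2 ≠ w2

namespace IsBowtie

variable [DecidableEq V] {v u1 u2 w1 w2 : V}

lemma adj_of_mem (h : IsBowtie G v u1 u2 w1 w2) :
    ∀ y ∈ ({u1, u2, v, w1, w2} : Finset V), y ≠ v → G.Adj v y := by
  simp only [mem_insert, mem_singleton]
  rintro y (rfl | rfl | rfl | rfl | rfl) hy
  exacts [h.adj_v_u1, h.adj_v_u2, absurd rfl hy, h.adj_v_w1, h.adj_v_w2]

lemma exists_common_neighbor (h : IsBowtie G v u1 u2 w1 w2) :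
    ∀ a ∈ ({u1, u2, v, w1, w2} : Finset V), ∀ b ∈ ({u1, u2, v, w1, w2} : Finset V),
      a ≠ b → ∃ z ∈ ({u1, u2, v, w1, w2} : Finset V), G.Adj a z ∧ G.Adj z b := by
  have := h.adj_v_u1; have := h.adj_v_u2; have := h.adj_u1_u2
  have := h.adj_v_w1; have := h.adj_v_w2; have := h.adj_w1_w2
  have := h.adj_v_u1.symm; have := h.adj_v_u2.symm; have := h.adj_u1_u2.symm
  have := h.adj_v_w1.symm; have := h.adj_v_w2.symm; have := h.adj_w1_w2.symm
  simp only [mem_insert, mem_singleton]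
  rintro a (rfl | rfl | rfl | rfl | rfl) b (rfl | rfl | rfl | rfl | rfl) hab <;>
    first
      | exact absurd rfl hab
      | exact ⟨v, by simp, by assumption, by assumption⟩
      | exact ⟨u1, by simp, by assumption, by assumption⟩
      | exact ⟨u2, by simp, by assumption, by assumption⟩
      | exact ⟨w1, by simp, by assumption, by assumption⟩
      | exact ⟨w2, by simp, by assumption, by assumption⟩

lemma two_le_degIn [DecidableRel G.Adj] (h : IsBowtie G v u1 u2 w1 w2) :
    ∀ y ∈ ({u1, u2, v, w1, w2} : Finset V), 2 ≤ degIn G {u1, u2, v, w1, w2} y := by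
  have pair : ∀ {y a b : V}, a ∈ ({u1, u2, v, w1, w2} : Finset V) →
      b ∈ ({u1, u2, v, w1, w2} : Finset V) → G.Adj y a → G.Adj y b → a ≠ b →
      2 ≤ degIn G {u1, u2, v, w1, w2} y := fun ha hb hya hyb hab =>
    (card_pair hab).symm.le.trans <| card_le_card <| by
      simp only [insert_subset_iff, singleton_subset_iff, mem_filter]
      exact ⟨⟨ha, hya⟩, hb, hyb⟩
  simp only [mem_insert, mem_singleton]
  rintro y (rfl | rfl | rfl | rfl | rfl)
  · exact pair (by simp) (by simp) h.adj_u1_u2 h.adj_v_u1.symm h.adj_v_u2.ne'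
  · exact pair (by simp) (by simp) h.adj_u1_u2.symm h.adj_v_u2.symm h.adj_v_u1.ne'
  · exact pair (by simp) (by simp) h.adj_v_u1 h.adj_v_u2 h.adj_u1_u2.ne
  · exact pair (by simp) (by simp) h.adj_w1_w2 h.adj_v_w1.symm h.adj_v_w2.ne'
  · exact pair (by simp) (by simp) h.adj_w1_w2.symm h.adj_v_w2.symm h.adj_v_w1.ne'

lemma mem_of_isUnionOfComponents (h : IsBowtie G v u1 u2 w1 w2) {x : V} {U : Finset V}
    (hx : x ∈ ({u1, u2, v, w1, w2} : Finset V))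
    (hU : IsUnionOfComponents G (({u1, u2, v, w1, w2} : Finset V).erase x) U)
    (hne : U.Nonempty) : u1 ∈ U ∨ w1 ∈ U := by
  rcases eq_or_ne x v with rfl | hxv
  · obtain ⟨a, ha⟩ := hne
    have haS := hU.1 ha
    simp only [mem_erase, mem_insert, mem_singleton] at haS
    rcases haS with ⟨hax, rfl | rfl | rfl | rfl | rfl⟩
    · exact .inl ha
    · exact .inl (hU.2 _ ha u1 (mem_erase.2 ⟨h.adj_v_u1.ne', by simp⟩) h.adj_u1_u2.symm)
    · exact absurd rfl hax
    · exact .inr ha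
    · exact .inr (hU.2 _ ha w1 (mem_erase.2 ⟨h.adj_v_w1.ne', by simp⟩) h.adj_w1_w2.symm)
  · have hUS := hU.eq_of_forall_adj hne (mem_erase.2 ⟨hxv.symm, by simp⟩)
      fun y hy hyv => h.adj_of_mem y (mem_of_mem_erase hy) hyv
    rcases eq_or_ne x u1 with rfl | hxu
    · exact .inr (hUS ▸ mem_erase.2 ⟨h.disjoint.1.symm, by simp⟩)
    · exact .inl (hUS ▸ mem_erase.2 ⟨hxu.symm, by simp⟩)

theorem colorableOn [DecidableRel G.Adj] (h : IsBowtie G v u1 u2 w1 w2) {f : V → ℤ} {x : V}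
    (hx : x ∈ ({u1, u2, v, w1, w2} : Finset V)) (hfx : 1 ≤ f x)
    (hdeg : ∀ y ∈ ({u1, u2, v, w1, w2} : Finset V), y ≠ x →
      (degIn G {u1, u2, v, w1, w2} y : ℤ) ≤ f y)
    (hu1 : u1 ≠ x → (degIn G {u1, u2, v, w1, w2} u1 : ℤ) < f u1)
    (hw1 : w1 ≠ x → (degIn G {u1, u2, v, w1, w2} w1 : ℤ) < f w1) :
    ColorableOn G {u1, u2, v, w1, w2} f := by
  refine colorableOn_of_one_le_of_degIn_le hx hfx hdeg fun U hU hne => ?_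
  rcases h.mem_of_isUnionOfComponents hx hU hne with hu | hw
  · exact ⟨u1, hu, hu1 (ne_of_mem_erase (hU.1 hu))⟩
  · exact ⟨w1, hw, hw1 (ne_of_mem_erase (hU.1 hw))⟩

end IsBowtie

end Bowtie

theorem twoTrianglesAtVertex_reducible {V : Type} [Fintype V] [DecidableEq V]
    (G : SimpleGraph V) [DecidableRel G.Adj]
    (v u1 u2 w1 w2 : V)
    (hvu1 : G.Adj v u1) (hvu2 : G.Adj v u2) (hu12 : G.Adj u1 u2)
    (hvw1 : G.Adj v w1) (hvw2 : G.Adj v w2) (hw12 : G.Adj w1 w2)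
    (hne : u1 ≠ w1 ∧ u1 ≠ w2 ∧ u2 ≠ w1 ∧ u2 ≠ w2)
    (hdv : G.degree v = 4) (hdu1 : G.degree u1 = 3) (hdu2 : G.degree u2 = 4)
    (hdw1 : G.degree w1 = 3) (hdw2 : G.degree w2 = 4) :
    BoundaryReducibleIn
      ({⟨Fin 4, SimpleGraph.cycleGraph 4⟩} : Set ((W : Type) × SimpleGraph W)) 4 G
      Finset.univ {u1, u2, v, w1, w2} ∅ := by
  have hB : IsBowtie G v u1 u2 w1 w2 := ⟨hvu1, hvu2, hu12, hvw1, hvw2, hw12, hne⟩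
  have hdeg : ∀ y ∈ ({u1, u2, v, w1, w2} : Finset V), G.degree y ≤ 4 := by
    simp only [mem_insert, mem_singleton]
    rintro y (rfl | rfl | rfl | rfl | rfl) <;> omega
  unfold BoundaryReducibleIn
  simp only [sdiff_empty, degIn_univ]
  refine ⟨subset_univ _, empty_ssubset.2 ⟨v, by simp⟩, fun x hx => ?_,
    fun I hI _ hforb => ?_⟩
  · refine hB.colorableOn hx (by simp) (fun y hy hyx => ?_) (fun hu => ?_) (fun hw => ?_)
    · simpa [Function.update_of_ne hyx] using hdeg y hy
    · simp [Function.update_of_ne hu, hdu1]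
    · simp [Function.update_of_ne hw, hdw1]
  obtain ⟨x, hxS, hIx⟩ : ∃ x ∈ ({u1, u2, v, w1, w2} : Finset V), I ⊆ {x} := by
    rcases I.eq_empty_or_nonempty with rfl | ⟨x, hx⟩
    · exact ⟨v, by simp, empty_subset _⟩
    · have := card_le_one_of_forbidding hI hforb hB.exists_common_neighbor
      exact ⟨x, hI hx, fun y hy => mem_singleton.2 (card_le_one.1 this y hy x hx)⟩
  have hnotI : ∀ y, y ≠ x → y ∉ I := fun y hyx hy => hyx (mem_singleton.1 (hIx hy))
  refine hB.colorableOn hxS ?_ (fun y hy hyx => ?_) (fun hu => ?_) (fun hw => ?_)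
  · have := hB.two_le_degIn x hxS
    have := hdeg x hxS
    split_ifs <;> omega
  · simpa [hnotI y hyx] using hdeg y hy
  · simp [hnotI u1 hu, hdu1]
  · simp [hnotI w1 hw, hdw1]
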